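/- arXiv:0909.0086 — 3 statements merged into one kernel-verified Lean document; each statement's English description precedes it below -/
import Mathlib

section
/- If P is a finite connected d-complete poset, then P has a unique maximal element. -/
/-- The order relation of the double-tailed diamond `d_k(1)` on `Fin (2*k-2)`. -/
def dtdLE (k : ℕ) (i j : Fin (2 * k - 2)) : Prop :=
  i = j ∨ (i.val < j.val ∧ ¬(i.val = k - 2 ∧ j.val = k - 1))

/-- The order relation of `d_k(1)` with its maximum removed, on `Fin (2*k-3)`. -/
def dtdmLE (k : ℕ) (i j : Fin (2 * k - 3)) : Prop :=
  i = j ∨ (i.val < j.val ∧ ¬(i.val = k - 2 ∧ j.val = k - 1))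

/-- `[w,v]` is a `d_k`-interval: the interval is order-isomorphic to `d_k(1)`. -/
def IsDkInterval {P : Type*} [PartialOrder P] (k : ℕ) (w v : P) : Prop :=
  Nonempty (Subrel ((· ≤ ·) : P → P → Prop) (Set.Icc w v) ≃r dtdLE k)

/-- `I` is a `d_k^-`-interval: for `k = 3` a triple `{w, x, y}` with `w` covered
by both `x` and `y`; for `k ≥ 4` an interval order-isomorphic to `d_k(1)` minus
its maximum. -/
def IsDkmInterval {P : Type*} [PartialOrder P] (k : ℕ) (I : Set P) : Prop :=
  if k = 3 then ∃ w x y : P, x ≠ y ∧ w ⋖ x ∧ w ⋖ y ∧ I = {w, x, y}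
  else ∃ w v : P, I = Set.Icc w v ∧
    Nonempty (Subrel ((· ≤ ·) : P → P → Prop) I ≃r dtdmLE k)

/-- `P` is `d`-complete: conditions (D1), (D2), (D3) hold for every `k ≥ 3`. -/
def IsDComplete (P : Type*) [PartialOrder P] : Prop :=
  ∀ k, 3 ≤ k →
    -- (D1) every `d_k^-`-interval extends by an element covering its maximal
    -- elements to a `d_k`-interval
    (∀ I : Set P, IsDkmInterval k I → ∃ v : P,
        (∀ m ∈ I, (∀ x ∈ I, ¬ m < x) → m ⋖ v) ∧
        Nonempty (Subrel ((· ≤ ·) : P → P → Prop) ((I ∪ {v} : Set P)) ≃r dtdLE k)) ∧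
    -- (D2) the top of a `d_k`-interval covers only elements of that interval
    (∀ w v : P, IsDkInterval k w v → ∀ u : P, u ⋖ v → u ∈ Set.Icc w v) ∧
    -- (D3) no two `d_k^-`-intervals differ only in their minimal elements
    (∀ I J : Set P, IsDkmInterval k I → IsDkmInterval k J →
        {x ∈ I | ∃ y ∈ I, y < x} = {x ∈ J | ∃ y ∈ J, y < x} → I = J)

/-!
Condition (D1) for `k = 3` says that two distinct covers `x, y` of a common element
`w` are both covered by some `v`. Induction on `w` along the well-founded order `>`
upgrades this to: any two elements with a common lower bound have a common upper
bound. Along a zigzag of comparabilities this gives a common upper bound for any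
two elements of a connected poset, so the poset is directed, and in a directed
poset a maximal element is the greatest element.
-/

theorem IsDComplete.exists_covBy_covBy {P : Type*} [PartialOrder P] (hd : IsDComplete P)
    {w x y : P} (hwx : w ⋖ x) (hwy : w ⋖ y) (hxy : x ≠ y) : ∃ v, x ⋖ v ∧ y ⋖ v := by
  have hI : IsDkmInterval 3 ({w, x, y} : Set P) := by
    rw [IsDkmInterval, if_pos rfl]
    exact ⟨w, x, y, hxy, hwx, hwy, rfl⟩
  obtain ⟨v, hv, -⟩ := (hd 3 le_rfl).1 _ hI
  have hx_max : ∀ t ∈ ({w, x, y} : Set P), ¬ x < t := by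
    rintro t (rfl | rfl | rfl) hlt
    · exact lt_asymm hwx.lt hlt
    · exact lt_irrefl _ hlt
    · exact hwy.2 hwx.lt hlt
  have hy_max : ∀ t ∈ ({w, x, y} : Set P), ¬ y < t := by
    rintro t (rfl | rfl | rfl) hlt
    · exact lt_asymm hwy.lt hlt
    · exact hwx.2 hwy.lt hlt
    · exact lt_irrefl _ hlt
  exact ⟨v, hv x (by simp) hx_max, hv y (by simp) hy_max⟩

theorem exists_ge_ge_of_le_of_le {α : Type*} [PartialOrder α] [WellFoundedGT α]
    [IsStronglyAtomic α] (hcov : ∀ w x y : α, w ⋖ x → w ⋖ y → ∃ z, x ≤ z ∧ y ≤ z)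
    {w x y : α} (hwx : w ≤ x) (hwy : w ≤ y) : ∃ z, x ≤ z ∧ y ≤ z := by
  induction w using WellFoundedGT.induction generalizing x y with
  | _ w ih =>
    rcases hwx.eq_or_lt with rfl | hwx
    · exact ⟨y, hwy, le_rfl⟩
    rcases hwy.eq_or_lt with rfl | hwy
    · exact ⟨x, le_rfl, hwx.le⟩
    obtain ⟨x', hwx', hx'x⟩ := exists_covBy_le_of_lt hwx
    obtain ⟨y', hwy', hy'y⟩ := exists_covBy_le_of_lt hwy
    obtain ⟨v, hx'v, hy'v⟩ := hcov w x' y' hwx' hwy'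
    obtain ⟨u, hxu, hvu⟩ := ih x' hwx'.lt hx'x hx'v
    obtain ⟨z, huz, hyz⟩ := ih y' hwy'.lt (hy'v.trans hvu) hy'y
    exact ⟨z, hxu.trans huz, hyz⟩

theorem exists_ge_ge_of_reflTransGen {α : Type*} [Preorder α]
    (hconf : ∀ w x y : α, w ≤ x → w ≤ y → ∃ z, x ≤ z ∧ y ≤ z) {x y : α}
    (hxy : Relation.ReflTransGen (fun a b => a ≤ b ∨ b ≤ a) x y) : ∃ z, x ≤ z ∧ y ≤ z := by
  induction hxy with
  | refl => exact ⟨x, le_rfl, le_rfl⟩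
  | tail _ hbc ih =>
    obtain ⟨z, hxz, hbz⟩ := ih
    rcases hbc with hbc | hcb
    · obtain ⟨u, hzu, hcu⟩ := hconf _ _ _ hbz hbc
      exact ⟨u, hxz.trans hzu, hcu⟩
    · exact ⟨z, hxz, hcb.trans hbz⟩

theorem IsDComplete.isDirectedOrder {P : Type*} [PartialOrder P] [Finite P]
    (hd : IsDComplete P)
    (hconn : ∀ x y : P, Relation.ReflTransGen (fun a b => a ≤ b ∨ b ≤ a) x y) :
    IsDirectedOrder P := by
  have hcov (w x y : P) (hwx : w ⋖ x) (hwy : w ⋖ y) : ∃ z, x ≤ z ∧ y ≤ z := by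
    rcases eq_or_ne x y with rfl | hxy
    · exact ⟨x, le_rfl, le_rfl⟩
    obtain ⟨v, hxv, hyv⟩ := hd.exists_covBy_covBy hwx hwy hxy
    exact ⟨v, hxv.le, hyv.le⟩
  exact ⟨fun x y => exists_ge_ge_of_reflTransGen
    (fun _ _ _ => exists_ge_ge_of_le_of_le hcov) (hconn x y)⟩

theorem existsUnique_isMax {α : Type*} [PartialOrder α] [IsDirectedOrder α] [WellFoundedGT α]
    [Nonempty α] : ∃! m : α, IsMax m := by
  obtain ⟨m, -, hm⟩ := wellFounded_gt.has_min (Set.univ : Set α) Set.univ_nonempty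
  have hm : IsMax m := fun b hmb => (eq_of_le_of_not_lt hmb (hm b trivial)).ge
  exact ⟨m, hm, fun m' hm' => le_antisymm (hm.isTop m') (hm'.isTop m)⟩

/-- A finite connected `d`-complete poset has a unique maximal element.
Connectedness means any two elements are joined by a chain of comparabilities
(the Hasse diagram is connected). -/
theorem stmt_3 {P : Type*} [PartialOrder P] [Fintype P] [Nonempty P]
    (hconn : ∀ x y : P, Relation.ReflTransGen (fun a b => a ≤ b ∨ b ≤ a) x y)
    (hd : IsDComplete P) :
    ∃! m : P, IsMax m :=
  have := hd.isDirectedOrder hconn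
  existsUnique_isMax
end

section
/- Let μ be a strict partition (μ_1 > μ_2 > … > μ_ℓ > 0) with ℓ ≥ 2. Then in the shifted shape S(μ) = {(i,j) : 1 ≤ i ≤ ℓ, i ≤ j ≤ μ_i + i − 1}, ordered with (1,1) as maximum, the top tree equals {(1,j) : 1 ≤ j ≤ μ_1} ∪ {(2,2)}. -/
/-!
Ordering the shifted shape `S(μ)` with `(1,1)` on top is the dual of the product order on
`ℕ × ℕ`. Since `μ` is strict, `μ_i + i` decreases with `i`, so every cell of the region
`1 ≤ i ≤ j` lying below a cell of `S(μ)` in the product order belongs to `S(μ)`. Hence a cell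
`y` is covered exactly by those of its neighbours `(y₁ - 1, y₂)` and `(y₁, y₂ - 1)` that lie in
`S(μ)`; both do unless `y` is in the first row or on the diagonal. The cells below `(1, j)` or
`(2, 2)` in the product order are all of this kind, while any other cell `(i, j)` lies above
`(2, j)` with `j ≥ 3`, which is covered twice.
-/

open Set

/-- For the order dual to `≤`, the paper's order on `S(μ)`, this says that `z` covers `y` in `S`. -/
def IsLowerCoverIn {α : Type*} [LE α] (S : Set α) (y z : α) : Prop :=
  y ∈ S ∧ z ∈ S ∧ z ≤ y ∧ y ≠ z ∧ ¬ ∃ u ∈ S, u ≠ y ∧ u ≠ z ∧ u ≤ y ∧ z ≤ u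

def dualTopTree {α : Type*} [LE α] (S : Set α) : Set α :=
  {x ∈ S | ∀ y ∈ S, y ≤ x → ∀ z z', IsLowerCoverIn S y z → IsLowerCoverIn S y z' → z = z'}

def shiftedShape (mu : ℕ → ℕ) (ell : ℕ) : Set (ℕ × ℕ) :=
  {p | 1 ≤ p.1 ∧ p.1 ≤ ell ∧ p.1 ≤ p.2 ∧ p.2 ≤ mu p.1 + p.1 - 1}

namespace shiftedShape

variable {mu : ℕ → ℕ} {ell : ℕ}

lemma antitoneOn_add_self (hstrict : ∀ i, 1 ≤ i → i < ell → mu (i + 1) < mu i) :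
    AntitoneOn (fun i => mu i + i) (Icc 1 ell) :=
  antitoneOn_of_succ_le ordConnected_Icc fun a _ ha hsa => by
    simp only [Order.succ_eq_add_one, mem_Icc] at ha hsa ⊢
    have := hstrict a ha.1 (by omega)
    omega

lemma mem_of_le (hmono : AntitoneOn (fun i => mu i + i) (Icc 1 ell)) {p y : ℕ × ℕ}
    (hy : y ∈ shiftedShape mu ell) (hpy : p ≤ y) (hp1 : 1 ≤ p.1) (hp12 : p.1 ≤ p.2) :
    p ∈ shiftedShape mu ell := by
  obtain ⟨hy1, hyell, -, hy2⟩ := hy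
  have := hmono ⟨hp1, hpy.1.trans hyell⟩ ⟨hy1, hyell⟩ hpy.1
  exact ⟨hp1, hpy.1.trans hyell, hp12, by simp only at this; have := hpy.2; omega⟩

lemma isLowerCoverIn_iff (hmono : AntitoneOn (fun i => mu i + i) (Icc 1 ell)) {y z : ℕ × ℕ} :
    IsLowerCoverIn (shiftedShape mu ell) y z ↔
      y ∈ shiftedShape mu ell ∧ z ∈ shiftedShape mu ell ∧ z ≤ y ∧ z.1 + z.2 + 1 = y.1 + y.2 := by
  constructor
  · rintro ⟨hy, hz, hzy, hne, hbetween⟩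
    refine ⟨hy, hz, hzy, ?_⟩
    by_contra hgap
    have hyz : z.1 + z.2 < y.1 + y.2 := by
      have : z.1 ≠ y.1 ∨ z.2 ≠ y.2 := by rw [Ne, Prod.ext_iff, not_and_or] at hne; tauto
      have := hzy.1; have := hzy.2; omega
    obtain ⟨hz1, -, hz12, -⟩ := hz
    have hzy1 := hzy.1; have hzy2 := hzy.2
    have hy12 := hy.2.2.1
    -- One step up from `z` towards `y`, staying in the region `u.1 ≤ u.2`.
    obtain ⟨u, hu⟩ : ∃ u : ℕ × ℕ, z.1 ≤ u.1 ∧ z.2 ≤ u.2 ∧ u.1 ≤ y.1 ∧ u.2 ≤ y.2 ∧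
        u.1 ≤ u.2 ∧ u.1 + u.2 = z.1 + z.2 + 1 := by
      by_cases hrow : z.1 < y.1 ∧ z.1 < z.2
      · exact ⟨(z.1 + 1, z.2), by simp only; omega⟩
      · exact ⟨(z.1, z.2 + 1), by simp only; omega⟩
    refine hbetween ⟨u, mem_of_le hmono hy ⟨hu.2.2.1, hu.2.2.2.1⟩ (by omega) hu.2.2.2.2.1,
      ?_, ?_, ⟨hu.2.2.1, hu.2.2.2.1⟩, ⟨hu.1, hu.2.1⟩⟩ <;>
      · rintro rfl; omega
  · rintro ⟨hy, hz, hzy, hsum⟩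
    refine ⟨hy, hz, hzy, by rintro rfl; omega, ?_⟩
    rintro ⟨u, -, huy, huz, ⟨hu1, hu2⟩, ⟨hzu1, hzu2⟩⟩
    rw [Ne, Prod.ext_iff] at huy huz
    omega

lemma lowerCover_unique_iff (hmono : AntitoneOn (fun i => mu i + i) (Icc 1 ell)) {y : ℕ × ℕ}
    (hy : y ∈ shiftedShape mu ell) :
    (∀ z z', IsLowerCoverIn (shiftedShape mu ell) y z →
      IsLowerCoverIn (shiftedShape mu ell) y z' → z = z') ↔ y.1 = 1 ∨ y.1 = y.2 := by
  simp only [isLowerCoverIn_iff hmono]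
  have hy1 := hy.1
  have hy12 := hy.2.2.1
  constructor
  · intro huniq
    by_contra! hoff
    have hrow : (y.1 - 1, y.2) ∈ shiftedShape mu ell :=
      mem_of_le hmono hy ⟨Nat.sub_le _ _, le_rfl⟩ (by simp only; omega) (by simp only; omega)
    have hcol : (y.1, y.2 - 1) ∈ shiftedShape mu ell :=
      mem_of_le hmono hy ⟨le_rfl, Nat.sub_le _ _⟩ hy1 (by simp only; omega)
    have := huniq _ _ ⟨hy, hrow, ⟨Nat.sub_le _ _, le_rfl⟩, by simp only; omega⟩
      ⟨hy, hcol, ⟨le_rfl, Nat.sub_le _ _⟩, by simp only; omega⟩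
    rw [Prod.ext_iff] at this
    omega
  · rintro hdiag z z' ⟨-, ⟨hz1, -, hz12, -⟩, ⟨hzy1, hzy2⟩, hz⟩
      ⟨-, ⟨hz1', -, hz12', -⟩, ⟨hzy1', hzy2'⟩, hz'⟩
    ext <;> omega

lemma dualTopTree_eq (hmono : AntitoneOn (fun i => mu i + i) (Icc 1 ell))
    (hell : 2 ≤ ell) (hmu2 : 1 ≤ mu 2) :
    dualTopTree (shiftedShape mu ell) = {p | p.1 = 1 ∧ 1 ≤ p.2 ∧ p.2 ≤ mu 1} ∪ {(2, 2)} := by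
  ext ⟨i, j⟩
  simp only [dualTopTree, mem_union, mem_ofPred_eq, mem_singleton_iff, Prod.mk.injEq]
  constructor
  · rintro ⟨hx, htop⟩
    obtain ⟨hi1, -, hij, hj⟩ := id hx
    simp only at hi1 hij hj
    rcases Nat.lt_or_ge i 2 with hi | hi2
    · obtain rfl : i = 1 := by omega
      exact Or.inl ⟨rfl, hij, by omega⟩
    right
    by_contra hne
    -- `(2, j)` lies below `(i, j)` and is neither in the first row nor on the diagonal.
    have hy : (2, j) ∈ shiftedShape mu ell :=
      mem_of_le hmono hx ⟨by simp only; omega, le_rfl⟩ (by simp only; omega) (by simp only; omega)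
    have := (lowerCover_unique_iff hmono hy).mp (htop _ hy ⟨by simp only; omega, le_rfl⟩)
    simp only at this
    omega
  · rintro (⟨rfl, hj1, hj⟩ | ⟨rfl, rfl⟩)
    · refine ⟨⟨le_rfl, by omega, hj1, by simp only; omega⟩, fun y hy hyx => ?_⟩
      exact (lowerCover_unique_iff hmono hy).mpr (Or.inl (by have := hy.1; have := hyx.1; omega))
    · refine ⟨⟨by omega, hell, le_rfl, by simp only; omega⟩, fun y hy hyx => ?_⟩
      refine (lowerCover_unique_iff hmono hy).mpr ?_
      have := hy.1; have := hyx.1; have := hyx.2; have := hy.2.2.1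
      omega

end shiftedShape

/-- For a strict partition `μ` of length `ℓ ≥ 2`, the top tree of the shifted
shape `S(μ) = {(i,j) : 1 ≤ i ≤ ℓ, i ≤ j ≤ μ_i + i - 1}` (ordered with `(1,1)`
maximal) equals `{(1,j) : 1 ≤ j ≤ μ₁} ∪ {(2,2)}`. -/
theorem stmt_7 (mu : ℕ → ℕ) (ell : ℕ) (hell : 2 ≤ ell)
    (hstrict : ∀ i, 1 ≤ i → i < ell → mu (i + 1) < mu i)
    (hpos : ∀ i, 1 ≤ i → i ≤ ell → 1 ≤ mu i)
    (S : Set (ℕ × ℕ))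
    (hS : S = {p : ℕ × ℕ | 1 ≤ p.1 ∧ p.1 ≤ ell ∧ p.1 ≤ p.2 ∧
      p.2 ≤ mu p.1 + p.1 - 1})
    (le : ℕ × ℕ → ℕ × ℕ → Prop)
    (hle : ∀ a b : ℕ × ℕ, le a b ↔ b.1 ≤ a.1 ∧ b.2 ≤ a.2)
    (covby : ℕ × ℕ → ℕ × ℕ → Prop)
    (hcovby : ∀ y z : ℕ × ℕ, covby y z ↔
      y ∈ S ∧ z ∈ S ∧ le y z ∧ y ≠ z ∧ ¬ ∃ u ∈ S, u ≠ y ∧ u ≠ z ∧ le y u ∧ le u z) :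
    {x ∈ S | ∀ y ∈ S, le x y →
        ∀ z z' : ℕ × ℕ, covby y z → covby y z' → z = z'} =
      {p : ℕ × ℕ | p.1 = 1 ∧ 1 ≤ p.2 ∧ p.2 ≤ mu 1} ∪ {(2, 2)} := by
  subst hS
  obtain rfl : le = fun a b => b ≤ a := funext₂ fun a b => propext (hle a b)
  obtain rfl : covby = IsLowerCoverIn (shiftedShape mu ell) :=
    funext₂ fun y z => propext (hcovby y z)
  exact shiftedShape.dualTopTree_eq (shiftedShape.antitoneOn_add_self hstrict) hell
    (hpos 2 (by omega) hell)
end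

section
/- Let λ be a partition and v = (i,j) ∈ D(λ) a cell with (i+1, j+1) ∈ D(λ) (so v is the top of a d_3-interval [(i+1,j+1),(i,j)] with sides (i,j+1) and (i+1,j) in the order where (1,1) is maximal). Then the inductively defined hook monomial satisfies z[H_{D(λ)}(i,j)] = z[H_{D(λ)}(i,j+1)] · z[H_{D(λ)}(i+1,j)] / z[H_{D(λ)}(i+1,j+1)], and this recursion together with the base case z[H(v)] = ∏_{w ≤ v} z_{c(w)} for cells in the first row or column implies z[H_{D(λ)}(i,j)] = ∏_{cells (a,b) in the hook of (i,j)} z_{b−a}, i.e., z[H(i,j)] = ∏_{b=j}^{λ_i} z_{b−i} · ∏_{a=i+1}^{λ'_j} z_{j−a}, where c is the content coloring c(a,b) = b−a. -/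
/-!
Record hooks by the multiset of contents of their cells. As multisets of cells,
`hook(i,j) + hook(i+1,j+1)` and `hook(i,j+1) + hook(i+1,j)` differ only in that the first contains
`(i,j)` where the second contains `(i+1,j+1)`; both have content `j - i`, so hook contents satisfy
the recursion of `H`. At a cell that is not the top of a `d₃`-interval, the cells below it are
exactly its hook, so the base cases agree as well. On a finite diagram such a recursion determines
the function, by downward induction on `i + j`.
-/

open Finset

lemma sum_Icc_eq_add_sum_Icc_add_one {M : Type*} [AddCommMonoid M] {a b : ℕ} (h : a ≤ b)
    (f : ℕ → M) : ∑ x ∈ Icc a b, f x = f a + ∑ x ∈ Icc (a + 1) b, f x := by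
  rw [Icc_add_one_left_eq_Ioc, add_sum_Ioc_eq_sum_Icc h]

lemma le_card_filter_Icc_iff {P : ℕ → Prop} [DecidablePred P]
    (hP : ∀ a b, 1 ≤ a → a ≤ b → P b → P a) {N a : ℕ} (ha : 1 ≤ a) :
    a ≤ #{x ∈ Icc 1 N | P x} ↔ a ≤ N ∧ P a := by
  constructor
  · intro h
    by_contra hn
    have hsub : {x ∈ Icc 1 N | P x} ⊆ Ico 1 a := fun x hx => by
      simp only [mem_filter, mem_Icc] at hx
      simp only [mem_Ico]
      refine ⟨hx.1.1, ?_⟩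
      by_contra hxa
      exact hn ⟨by omega, hP a x ha (by omega) hx.2⟩
    have := card_le_card hsub
    simp only [Nat.card_Ico] at this
    omega
  · rintro ⟨haN, hPa⟩
    calc a = #(Icc 1 a) := by simp
      _ ≤ _ := card_le_card fun x hx => by
        simp only [mem_Icc] at hx
        simp only [mem_filter, mem_Icc]
        exact ⟨⟨hx.1, by omega⟩, hP x a hx.1 hx.2 hPa⟩

theorem eqOn_of_square_recursion {M : Type*} [Add M] [IsRightCancelAdd M] (D : Finset (ℕ × ℕ))
    (hD : ∀ p ∈ D, (p.1 + 1, p.2 + 1) ∈ D → (p.1, p.2 + 1) ∈ D ∧ (p.1 + 1, p.2) ∈ D)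
    (F G : ℕ × ℕ → M) (hbase : ∀ p ∈ D, (p.1 + 1, p.2 + 1) ∉ D → F p = G p)
    (hF : ∀ p ∈ D, (p.1 + 1, p.2 + 1) ∈ D →
      F p + F (p.1 + 1, p.2 + 1) = F (p.1, p.2 + 1) + F (p.1 + 1, p.2))
    (hG : ∀ p ∈ D, (p.1 + 1, p.2 + 1) ∈ D →
      G p + G (p.1 + 1, p.2 + 1) = G (p.1, p.2 + 1) + G (p.1 + 1, p.2)) :
    ∀ p ∈ D, F p = G p := by
  set B := D.sup fun q => q.1 + q.2
  have hB : ∀ q ∈ D, q.1 + q.2 ≤ B := fun q hq => le_sup (f := fun q => q.1 + q.2) hq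
  suffices h : ∀ n, ∀ p ∈ D, B ≤ p.1 + p.2 + n → F p = G p from
    fun p hp => h B p hp (by omega)
  intro n
  induction n with
  | zero =>
    intro p hp hpB
    exact hbase p hp fun hq => by have := hB _ hq; dsimp only at this; omega
  | succ n ih =>
    intro p hp hpB
    by_cases hq : (p.1 + 1, p.2 + 1) ∈ D
    · obtain ⟨hr, hd⟩ := hD p hp hq
      apply add_right_cancel (b := F (p.1 + 1, p.2 + 1))
      rw [hF p hp hq, ih _ hr (by dsimp only; omega), ih _ hd (by dsimp only; omega),
        ← hG p hp hq, ih _ hq (by dsimp only; omega)]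
    · exact hbase p hp hq

def youngCells (lam : ℕ → ℕ) (N : ℕ) : Finset (ℕ × ℕ) :=
  ((Icc 1 N) ×ˢ (Icc 1 (lam 1))).filter fun p => p.2 ≤ lam p.1

def conjugate (lam : ℕ → ℕ) (N : ℕ) (j : ℕ) : ℕ :=
  #((Icc 1 N).filter fun a => j ≤ lam a)

noncomputable def hookContent (lam conj : ℕ → ℕ) (p : ℕ × ℕ) : ℤ →₀ ℕ :=
  (∑ b ∈ Icc p.2 (lam p.1), Finsupp.single ((b : ℤ) - p.1) 1) +
    ∑ a ∈ Icc (p.1 + 1) (conj p.2), Finsupp.single ((p.2 : ℤ) - a) 1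

section Partition

variable {lam : ℕ → ℕ} {N : ℕ}

lemma mem_youngCells (hlam : ∀ i j, 1 ≤ i → i ≤ j → lam j ≤ lam i)
    (hN : ∀ i, N < i → lam i = 0) {p : ℕ × ℕ} :
    p ∈ youngCells lam N ↔ 1 ≤ p.1 ∧ 1 ≤ p.2 ∧ p.2 ≤ lam p.1 := by
  simp only [youngCells, mem_filter, mem_product, mem_Icc]
  constructor
  · rintro ⟨⟨⟨h1, -⟩, h2, -⟩, h3⟩
    exact ⟨h1, h2, h3⟩
  · rintro ⟨h1, h2, h3⟩
    refine ⟨⟨⟨h1, ?_⟩, h2, h3.trans (hlam 1 p.1 le_rfl h1)⟩, h3⟩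
    by_contra h
    have := hN p.1 (by omega)
    omega

lemma le_conjugate_iff (hlam : ∀ i j, 1 ≤ i → i ≤ j → lam j ≤ lam i)
    (hN : ∀ i, N < i → lam i = 0) {a j : ℕ} (ha : 1 ≤ a) (hj : 1 ≤ j) :
    a ≤ conjugate lam N j ↔ j ≤ lam a := by
  rw [conjugate, le_card_filter_Icc_iff (fun a b ha hab hb => hb.trans (hlam a b ha hab)) ha]
  refine ⟨And.right, fun h => ⟨?_, h⟩⟩
  by_contra hNa
  have := hN a (by omega)
  omega

lemma youngCells_square_closed (hlam : ∀ i j, 1 ≤ i → i ≤ j → lam j ≤ lam i)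
    (hN : ∀ i, N < i → lam i = 0) :
    ∀ p ∈ youngCells lam N, (p.1 + 1, p.2 + 1) ∈ youngCells lam N →
      (p.1, p.2 + 1) ∈ youngCells lam N ∧ (p.1 + 1, p.2) ∈ youngCells lam N := by
  intro p hp hq
  simp only [mem_youngCells hlam hN] at hp hq ⊢
  exact ⟨⟨hp.1, by omega, hq.2.2.trans (hlam p.1 (p.1 + 1) hp.1 (by omega))⟩,
    ⟨by omega, hp.2.1, by omega⟩⟩

lemma filter_le_youngCells_eq_hook (hlam : ∀ i j, 1 ≤ i → i ≤ j → lam j ≤ lam i)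
    (hN : ∀ i, N < i → lam i = 0) {p : ℕ × ℕ} (hp : p ∈ youngCells lam N)
    (hq : (p.1 + 1, p.2 + 1) ∉ youngCells lam N) :
    (youngCells lam N).filter (fun w => p.1 ≤ w.1 ∧ p.2 ≤ w.2) =
      ({p.1} ×ˢ Icc p.2 (lam p.1)) ∪ (Icc (p.1 + 1) (conjugate lam N p.2) ×ˢ {p.2}) := by
  rw [mem_youngCells hlam hN] at hp hq
  ext w
  simp only [mem_filter, mem_union, mem_product, mem_singleton, mem_Icc, mem_youngCells hlam hN]
  constructor
  · rintro ⟨⟨hw1, hw2, hwl⟩, hpw1, hpw2⟩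
    rcases hpw1.eq_or_lt with h | h
    · exact Or.inl ⟨h.symm, hpw2, h ▸ hwl⟩
    · have hw2p : w.2 = p.2 := by
        by_contra hne
        exact hq ⟨by omega, by omega,
          (show p.2 + 1 ≤ w.2 by omega).trans (hwl.trans (hlam (p.1 + 1) w.1 (by omega) h))⟩
      exact Or.inr ⟨⟨h, (le_conjugate_iff hlam hN hw1 hp.2.1).2 (hw2p ▸ hwl)⟩, hw2p⟩
  · rintro (⟨hw1, hw2, hwl⟩ | ⟨⟨hw1, hwc⟩, hw2⟩)
    · exact ⟨⟨by omega, by omega, hw1 ▸ hwl⟩, hw1.ge, hw2⟩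
    · exact ⟨⟨by omega, by omega, hw2 ▸ (le_conjugate_iff hlam hN (by omega) hp.2.1).1 hwc⟩,
        by omega, hw2.ge⟩

end Partition

lemma sum_content_hook_eq_hookContent (lam conj : ℕ → ℕ) (p : ℕ × ℕ) :
    ∑ w ∈ ({p.1} ×ˢ Icc p.2 (lam p.1)) ∪ (Icc (p.1 + 1) (conj p.2) ×ˢ {p.2}),
      Finsupp.single ((w.2 : ℤ) - w.1) 1 = hookContent lam conj p := by
  have hdisj : Disjoint ({p.1} ×ˢ Icc p.2 (lam p.1)) (Icc (p.1 + 1) (conj p.2) ×ˢ {p.2}) := by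
    rw [disjoint_left]
    rintro w hw hw'
    simp only [mem_product, mem_singleton, mem_Icc] at hw hw'
    omega
  rw [sum_union hdisj, sum_product, sum_product]
  simp [hookContent]

lemma hookContent_add_hookContent_diag (lam conj : ℕ → ℕ) {i j : ℕ} (h1 : j ≤ lam i)
    (h2 : j ≤ lam (i + 1)) (h3 : i + 1 ≤ conj j) (h4 : i + 1 ≤ conj (j + 1)) :
    hookContent lam conj (i, j) + hookContent lam conj (i + 1, j + 1) =
      hookContent lam conj (i, j + 1) + hookContent lam conj (i + 1, j) := by
  simp only [hookContent]
  rw [sum_Icc_eq_add_sum_Icc_add_one h1, sum_Icc_eq_add_sum_Icc_add_one h2,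
    sum_Icc_eq_add_sum_Icc_add_one h3, sum_Icc_eq_add_sum_Icc_add_one h4]
  have hcontent : ((j + 1 : ℕ) : ℤ) - ((i + 1 : ℕ) : ℤ) = (j : ℤ) - i := by push_cast; ring
  rw [hcontent]
  abel

open Finset in
/-- For a partition `λ`, the inductively defined hook monomials of the cell
poset `D(λ)` (here recorded as exponent vectors over the colors `ℤ`, with the
content coloring `c(a,b) = b - a`): the recursion
`z[H(i,j)] · z[H(i+1,j+1)] = z[H(i,j+1)] · z[H(i+1,j)]` for cells with
`(i+1,j+1) ∈ D(λ)`, together with the base case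
`z[H(v)] = ∏_{w ≤ v} z_{c(w)}` when `(i+1,j+1) ∉ D(λ)`, implies that
`z[H(i,j)] = ∏_{b=j}^{λ_i} z_{b-i} · ∏_{a=i+1}^{λ'_j} z_{j-a}`,
the product of the variables over the hook of `(i,j)`. -/
theorem stmt_17 (lam : ℕ → ℕ) (hlam : ∀ i j, 1 ≤ i → i ≤ j → lam j ≤ lam i)
    (N : ℕ) (hN : ∀ i, N < i → lam i = 0)
    (Dfin : Finset (ℕ × ℕ))
    (hD : Dfin = ((Icc 1 N) ×ˢ (Icc 1 (lam 1))).filter (fun p => p.2 ≤ lam p.1))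
    -- the conjugate partition
    (conj : ℕ → ℕ)
    (hconj : ∀ j : ℕ, conj j = ((Icc 1 N).filter (fun a => j ≤ lam a)).card)
    -- the inductively defined hook exponent vectors
    (H : ℕ × ℕ → (ℤ →₀ ℕ))
    -- base case: cells not the top of a d₃-interval
    (hbase : ∀ p ∈ Dfin, (p.1 + 1, p.2 + 1) ∉ Dfin →
      H p = ∑ w ∈ Dfin.filter (fun w => p.1 ≤ w.1 ∧ p.2 ≤ w.2),
        Finsupp.single ((w.2 : ℤ) - w.1) 1)
    -- recursion: tops of d₃-intervals (multiplicatively,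
    -- `z[H(i,j)] = z[H(i,j+1)]·z[H(i+1,j)]/z[H(i+1,j+1)]`)
    (hrec : ∀ p ∈ Dfin, (p.1 + 1, p.2 + 1) ∈ Dfin →
      H p + H (p.1 + 1, p.2 + 1) = H (p.1, p.2 + 1) + H (p.1 + 1, p.2)) :
    ∀ p ∈ Dfin,
      H p = (∑ b ∈ Icc p.2 (lam p.1), Finsupp.single ((b : ℤ) - p.1) 1) +
        ∑ a ∈ Icc (p.1 + 1) (conj p.2), Finsupp.single ((p.2 : ℤ) - a) 1 := by
  obtain rfl : Dfin = youngCells lam N := hD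
  obtain rfl : conj = conjugate lam N := funext hconj
  refine eqOn_of_square_recursion _ (youngCells_square_closed hlam hN) H
    (hookContent lam (conjugate lam N)) (fun p hp hq => ?_) hrec (fun p hp hq => ?_)
  · rw [hbase p hp hq, filter_le_youngCells_eq_hook hlam hN hp hq,
      sum_content_hook_eq_hookContent]
  · simp only [mem_youngCells hlam hN] at hp hq
    exact hookContent_add_hookContent_diag lam _ hp.2.2 (by omega)
      ((le_conjugate_iff hlam hN (by omega) hp.2.1).2 (by omega))
      ((le_conjugate_iff hlam hN (by omega) (by omega)).2 hq.2.2)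
end
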